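/- Let n ≥ 1, let k be an integer with 0 < k < n, let x ∈ ℝⁿ, and let τ > 0. A point y ∈ (0,1)ⁿ with Σᵢ yᵢ = k is the minimizer of −xᵀy − τ·H_b(y) over {y ∈ ℝⁿ : 0 < yᵢ < 1, Σᵢ yᵢ = k} if and only if there exists ν ∈ ℝ such that yᵢ = σ((xᵢ + ν)/τ) for every i, where σ is the sigmoid function. -/

import Mathlib

open Finset

/-- The binary entropy function `H_b(y) = -∑ i, [y i log (y i) + (1 - y i) log (1 - y i)]`. -/
noncomputable def binEntropy {n : ℕ} (y : Fin n → ℝ) : ℝ :=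
  -(∑ i, (y i * Real.log (y i) + (1 - y i) * Real.log (1 - y i)))

/-- The sigmoid function `σ(t) = 1 / (1 + exp (-t))`. -/
noncomputable def sigmoid (t : ℝ) : ℝ := 1 / (1 + Real.exp (-t))

/-! At a sigmoid point `w` with multiplier `ν` we have `τ · logit wᵢ = xᵢ + ν`, so the tangent
inequality of the binary entropy at `w` becomes an exact identity for the objective `F`:
`F z - F w = τ ∑ᵢ KL(Ber zᵢ ‖ Ber wᵢ) + ν (∑ᵢ zᵢ - ∑ᵢ wᵢ)`. Hence a sigmoid point is the unique
minimizer on its slice `∑ᵢ zᵢ = const`. Since `ν ↦ ∑ᵢ σ((xᵢ + ν)/τ)` runs continuously from `0` to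
`n`, for `0 < k < n` some sigmoid point lies on the slice `∑ᵢ zᵢ = k`, and every minimizer there
must be that point. -/

open Set Filter Topology InformationTheory

lemma sigmoid_eq_real_sigmoid : sigmoid = Real.sigmoid := by
  ext t
  rw [sigmoid, Real.sigmoid_def, one_div]

lemma sigmoid_mem_Ioo (t : ℝ) : sigmoid t ∈ Ioo (0 : ℝ) 1 := by
  rw [sigmoid_eq_real_sigmoid]
  exact ⟨Real.sigmoid_pos t, Real.sigmoid_lt_one t⟩

lemma log_sigmoid_sub_log_one_sub_sigmoid (u : ℝ) :
    Real.log (Real.sigmoid u) - Real.log (1 - Real.sigmoid u) = u := by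
  rw [← Real.sigmoid_neg, ← Real.sigmoid_mul_rexp_neg,
    Real.log_mul (Real.sigmoid_pos u).ne' (Real.exp_ne_zero _), Real.log_exp]
  ring

/-- `KL(Ber t ‖ Ber s)`, written with `klFun` so that nonnegativity and its equality case are
those of `klFun`. -/
noncomputable def bernoulliKL (t s : ℝ) : ℝ :=
  s * klFun (t / s) + (1 - s) * klFun ((1 - t) / (1 - s))

lemma Real.binEntropy_sub_binEntropy {s t : ℝ} (hs : s ∈ Ioo (0 : ℝ) 1) (ht : t ∈ Ioo (0 : ℝ) 1) :
    Real.binEntropy s - Real.binEntropy t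
      = bernoulliKL t s + (Real.log s - Real.log (1 - s)) * (t - s) := by
  obtain ⟨hs0, hs1⟩ := hs
  obtain ⟨ht0, ht1⟩ := ht
  have hs1' : (1 - s) ≠ 0 := by linarith
  have ht1' : (1 - t) ≠ 0 := by linarith
  simp only [bernoulliKL, klFun_apply, Real.binEntropy, Real.log_inv,
    Real.log_div ht0.ne' hs0.ne', Real.log_div ht1' hs1']
  field_simp
  ring

lemma bernoulliKL_nonneg {s t : ℝ} (hs : s ∈ Ioo (0 : ℝ) 1) (ht : t ∈ Icc (0 : ℝ) 1) :
    0 ≤ bernoulliKL t s :=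
  add_nonneg (mul_nonneg hs.1.le (klFun_nonneg (div_nonneg ht.1 hs.1.le)))
    (mul_nonneg (sub_pos.2 hs.2).le
      (klFun_nonneg (div_nonneg (sub_nonneg.2 ht.2) (sub_pos.2 hs.2).le)))

lemma bernoulliKL_pos {s t : ℝ} (hs : s ∈ Ioo (0 : ℝ) 1) (ht : t ∈ Icc (0 : ℝ) 1) (hts : t ≠ s) :
    0 < bernoulliKL t s := by
  have hkl : 0 < klFun (t / s) := by
    refine (klFun_nonneg (div_nonneg ht.1 hs.1.le)).lt_of_ne' ?_
    rwa [Ne, klFun_eq_zero_iff (div_nonneg ht.1 hs.1.le), div_eq_one_iff_eq hs.1.ne']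
  exact add_pos_of_pos_of_nonneg (mul_pos hs.1 hkl)
    (mul_nonneg (sub_pos.2 hs.2).le
      (klFun_nonneg (div_nonneg (sub_nonneg.2 ht.2) (sub_pos.2 hs.2).le)))

lemma binEntropy_eq_sum {n : ℕ} (y : Fin n → ℝ) : binEntropy y = ∑ i, Real.binEntropy (y i) := by
  simp only [binEntropy, Real.binEntropy, Real.log_inv, ← sum_neg_distrib]
  congr 1; ext i; ring

section Objective

variable {n : ℕ} (x : Fin n → ℝ) (τ : ℝ)

noncomputable def lmlObjective (y : Fin n → ℝ) : ℝ := -(∑ i, x i * y i) - τ * binEntropy y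

variable {x τ}

lemma lmlObjective_sub_lmlObjective_of_sigmoid (hτ : τ ≠ 0) {ν : ℝ} {w z : Fin n → ℝ}
    (hw : ∀ i, w i = sigmoid ((x i + ν) / τ)) (hz : ∀ i, z i ∈ Ioo (0 : ℝ) 1) :
    lmlObjective x τ z - lmlObjective x τ w
      = τ * ∑ i, bernoulliKL (z i) (w i) + ν * (∑ i, z i - ∑ i, w i) := by
  have hw' : ∀ i, w i ∈ Ioo (0 : ℝ) 1 := fun i => hw i ▸ sigmoid_mem_Ioo _
  have hlogit : ∀ i, τ * (Real.log (w i) - Real.log (1 - w i)) = x i + ν := fun i => by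
    rw [hw i, sigmoid_eq_real_sigmoid, log_sigmoid_sub_log_one_sub_sigmoid]
    field_simp
  have hcoord : ∀ i, τ * (Real.binEntropy (w i) - Real.binEntropy (z i)) - x i * (z i - w i)
      = τ * bernoulliKL (z i) (w i) + ν * (z i - w i) := fun i => by
    rw [Real.binEntropy_sub_binEntropy (hw' i) (hz i), mul_add, ← mul_assoc, hlogit]
    ring
  calc lmlObjective x τ z - lmlObjective x τ w
      = ∑ i, (τ * (Real.binEntropy (w i) - Real.binEntropy (z i)) - x i * (z i - w i)) := by
        simp only [lmlObjective, binEntropy_eq_sum, mul_sub, sum_sub_distrib, mul_sum]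
        ring
    _ = τ * ∑ i, bernoulliKL (z i) (w i) + ν * (∑ i, z i - ∑ i, w i) := by
        rw [sum_congr rfl fun i _ => hcoord i, sum_add_distrib, ← mul_sum, ← mul_sum,
          sum_sub_distrib]

lemma lmlObjective_lt_of_sigmoid (hτ : 0 < τ) {ν : ℝ} {w z : Fin n → ℝ}
    (hw : ∀ i, w i = sigmoid ((x i + ν) / τ)) (hz : ∀ i, z i ∈ Ioo (0 : ℝ) 1)
    (hsum : ∑ i, z i = ∑ i, w i) (hne : z ≠ w) :
    lmlObjective x τ w < lmlObjective x τ z := by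
  have hw' : ∀ i, w i ∈ Ioo (0 : ℝ) 1 := fun i => hw i ▸ sigmoid_mem_Ioo _
  obtain ⟨j, hj⟩ := Function.ne_iff.1 hne
  have hKL : 0 < ∑ i, bernoulliKL (z i) (w i) :=
    sum_pos' (fun i _ => bernoulliKL_nonneg (hw' i) (Ioo_subset_Icc_self (hz i)))
      ⟨j, mem_univ j, bernoulliKL_pos (hw' j) (Ioo_subset_Icc_self (hz j)) hj⟩
  have hgap := lmlObjective_sub_lmlObjective_of_sigmoid hτ.ne' hw hz
  rw [hsum, sub_self, mul_zero, add_zero] at hgap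
  linarith [mul_pos hτ hKL]

lemma lmlObjective_le_of_sigmoid (hτ : 0 < τ) {ν : ℝ} {w z : Fin n → ℝ}
    (hw : ∀ i, w i = sigmoid ((x i + ν) / τ)) (hz : ∀ i, z i ∈ Ioo (0 : ℝ) 1)
    (hsum : ∑ i, z i = ∑ i, w i) :
    lmlObjective x τ w ≤ lmlObjective x τ z := by
  rcases eq_or_ne z w with rfl | hne
  · exact le_rfl
  · exact (lmlObjective_lt_of_sigmoid hτ hw hz hsum hne).le

end Objective

lemma exists_sum_sigmoid_eq {n : ℕ} (x : Fin n → ℝ) {τ : ℝ} (hτ : 0 < τ) {c : ℝ}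
    (hc0 : 0 < c) (hcn : c < n) : ∃ ν : ℝ, ∑ i, sigmoid ((x i + ν) / τ) = c := by
  rw [sigmoid_eq_real_sigmoid]
  set S : ℝ → ℝ := fun ν => ∑ i, Real.sigmoid ((x i + ν) / τ)
  have hS : Continuous S := by fun_prop
  have hbot : Tendsto S atBot (𝓝 0) := by
    rw [← sum_const_zero]
    refine tendsto_finsetSum _ fun i _ => ?_
    exact Real.tendsto_sigmoid_atBot.comp
      ((tendsto_atBot_add_const_left _ _ tendsto_id).atBot_div_const hτ)
  have htop : Tendsto S atTop (𝓝 n) := by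
    have : ∑ _i : Fin n, (1 : ℝ) = n := by simp
    rw [← this]
    refine tendsto_finsetSum _ fun i _ => ?_
    exact Real.tendsto_sigmoid_atTop.comp
      ((tendsto_atTop_add_const_left _ _ tendsto_id).atTop_div_const hτ)
  obtain ⟨a, ha⟩ := (hbot.eventually (gt_mem_nhds hc0)).exists
  obtain ⟨b, hb⟩ := (htop.eventually (lt_mem_nhds hcn)).exists
  exact intermediate_value_univ a b hS ⟨ha.le, hb.le⟩

theorem lml_minimizer_iff_sigmoid_general (n k : ℕ) (hk0 : 0 < k) (hkn : k < n)
    (x : Fin n → ℝ) (τ : ℝ) (hτ : 0 < τ)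
    (y : Fin n → ℝ) (hy : ∀ i, y i ∈ Set.Ioo (0 : ℝ) 1) (hsum : (∑ i, y i) = k) :
    (∀ z : Fin n → ℝ, (∀ i, z i ∈ Set.Ioo (0 : ℝ) 1) → (∑ i, z i) = k →
      -(∑ i, x i * y i) - τ * binEntropy y ≤ -(∑ i, x i * z i) - τ * binEntropy z) ↔
    (∃ ν : ℝ, ∀ i, y i = sigmoid ((x i + ν) / τ)) := by
  constructor
  · intro hmin
    obtain ⟨ν, hν⟩ := exists_sum_sigmoid_eq x hτ (Nat.cast_pos.2 hk0) (Nat.cast_lt.2 hkn)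
    suffices y = fun i => sigmoid ((x i + ν) / τ) from ⟨ν, congrFun this⟩
    by_contra hne
    exact (hmin _ (fun i => sigmoid_mem_Ioo _) hν).not_gt
      (lmlObjective_lt_of_sigmoid hτ (fun i => rfl) hy (hsum.trans hν.symm) hne)
  · rintro ⟨ν, hν⟩ z hz hzsum
    exact lmlObjective_le_of_sigmoid hτ hν hz (hzsum.trans hsum.symm)

/-- First-order characterization of the temperature-scaled LML projection: a point
`y ∈ (0,1)ⁿ` with `∑ᵢ yᵢ = k` minimizes `-⟪x,y⟫ - τ·H_b(y)` over
`{y : 0 < yᵢ < 1, ∑ᵢ yᵢ = k}` if and only if there is a multiplier `ν ∈ ℝ` with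
`yᵢ = σ((xᵢ + ν)/τ)` for all `i`. -/
theorem lml_minimizer_iff_sigmoid (n k : ℕ) (hn : 1 ≤ n) (hk0 : 0 < k) (hkn : k < n)
    (x : Fin n → ℝ) (τ : ℝ) (hτ : 0 < τ)
    (y : Fin n → ℝ) (hy : ∀ i, y i ∈ Set.Ioo (0 : ℝ) 1) (hsum : (∑ i, y i) = k) :
    (∀ z : Fin n → ℝ, (∀ i, z i ∈ Set.Ioo (0 : ℝ) 1) → (∑ i, z i) = k →
      -(∑ i, x i * y i) - τ * binEntropy y ≤ -(∑ i, x i * z i) - τ * binEntropy z) ↔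
    (∃ ν : ℝ, ∀ i, y i = sigmoid ((x i + ν) / τ)) :=
  lml_minimizer_iff_sigmoid_general n k hk0 hkn x τ hτ y hy hsum
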